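/- Let M ≥ 2 and let θ : (ZMod M) × (ZMod M) → ℝ be a phase configuration on the M × M periodic lattice such that for every pair of nearest-neighbor sites the difference of phases is not congruent to π modulo 2π. Then the number of cells whose lattice curl equals +2π is equal to the number of cells whose lattice curl equals −2π. (On a torus, positive and negative phase vortices occur in equal numbers.) -/

import Mathlib

/-!
Each wrapped edge difference differs from the true difference by a multiple of `2π`, and the
true differences around a cell sum to zero, so every curl lies in `2πℤ`; as each wrapped term
lies in `(-π, π)`, the curl lies in `(-4π, 4π)`, hence in `{-2π, 0, 2π}`. Summed over the torus,
every edge is traversed once in each direction, and `wrap` is odd away from `π + 2πℤ`, so the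
total curl is zero. Hence `2π · (#positive - #negative) = 0`.
-/

open Real Finset

/-- `wrap x` is the unique number in the interval `(-π, π]` congruent to `x` modulo `2π`. -/
noncomputable def wrap (x : ℝ) : ℝ := toIocMod Real.two_pi_pos (-Real.pi) x

/-- `x` is not congruent to `π` modulo `2π`. -/
def NotPiMod (x : ℝ) : Prop := ∀ k : ℤ, x ≠ Real.pi + 2 * Real.pi * k

/-- The lattice curl of the cell of the `M × M` periodic lattice with lower-left corner
`(i, j)`, whose corners in cyclic order are `(i,j), (i+1,j), (i+1,j+1), (i,j+1)`. -/
noncomputable def latticeCurl {M : ℕ} (θ : ZMod M × ZMod M → ℝ) (i j : ZMod M) : ℝ :=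
  wrap (θ (i + 1, j) - θ (i, j)) + wrap (θ (i + 1, j + 1) - θ (i + 1, j)) +
    wrap (θ (i, j + 1) - θ (i + 1, j + 1)) + wrap (θ (i, j) - θ (i, j + 1))

lemma wrap_mem_Ioc (x : ℝ) : wrap x ∈ Set.Ioc (-π) π := by
  simpa [wrap, show -π + 2 * π = π by ring] using toIocMod_mem_Ioc two_pi_pos (-π) x

lemma exists_wrap_eq_add_int_mul (x : ℝ) : ∃ k : ℤ, wrap x = x + k * (2 * π) :=
  ⟨-toIocDiv two_pi_pos (-π) x, by
    unfold wrap; push_cast; linarith [toIocMod_sub_self_eq_mul two_pi_pos (-π) x]⟩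

lemma NotPiMod.neg {x : ℝ} (h : NotPiMod x) : NotPiMod (-x) := fun k hk =>
  h (-k - 1) (by push_cast; linarith)

lemma NotPiMod.wrap_mem_Ioo {x : ℝ} (h : NotPiMod x) : wrap x ∈ Set.Ioo (-π) π := by
  obtain ⟨hlo, hhi⟩ := wrap_mem_Ioc x
  refine ⟨hlo, hhi.lt_of_ne fun hπ => ?_⟩
  obtain ⟨k, hk⟩ := exists_wrap_eq_add_int_mul x
  exact h (-k) (by push_cast; linarith)

lemma NotPiMod.wrap_neg {x : ℝ} (h : NotPiMod x) : wrap (-x) = -wrap x := by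
  obtain ⟨hlo, hhi⟩ := h.wrap_mem_Ioo
  obtain ⟨k, hk⟩ := exists_wrap_eq_add_int_mul x
  refine (toIocMod_eq_iff two_pi_pos).2 ⟨⟨by linarith, by linarith⟩, k, ?_⟩
  rw [zsmul_eq_mul]; linarith

lemma wrap_add_wrap_add_wrap_add_wrap_mem {a b c d : ℝ} (habcd : a + b + c + d = 0)
    (ha : NotPiMod a) (hb : NotPiMod b) (hc : NotPiMod c) (hd : NotPiMod d) :
    wrap a + wrap b + wrap c + wrap d ∈ ({-(2 * π), 0, 2 * π} : Set ℝ) := by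
  obtain ⟨ka, hka⟩ := exists_wrap_eq_add_int_mul a
  obtain ⟨kb, hkb⟩ := exists_wrap_eq_add_int_mul b
  obtain ⟨kc, hkc⟩ := exists_wrap_eq_add_int_mul c
  obtain ⟨kd, hkd⟩ := exists_wrap_eq_add_int_mul d
  set k := ka + kb + kc + kd
  have hsum : wrap a + wrap b + wrap c + wrap d = k * (2 * π) := by
    simp only [k]; push_cast; linarith
  have hk : -2 < k ∧ k < 2 := by
    obtain ⟨ha₁, ha₂⟩ := ha.wrap_mem_Ioo
    obtain ⟨hb₁, hb₂⟩ := hb.wrap_mem_Ioo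
    obtain ⟨hc₁, hc₂⟩ := hc.wrap_mem_Ioo
    obtain ⟨hd₁, hd₂⟩ := hd.wrap_mem_Ioo
    have hk : -2 < (k : ℝ) ∧ (k : ℝ) < 2 := by
      constructor <;> by_contra! h <;> nlinarith [pi_pos]
    exact_mod_cast hk
  obtain hk | hk | hk : k = -1 ∨ k = 0 ∨ k = 1 := by omega
  all_goals simp [hsum, hk]

lemma card_filter_eq_card_filter_neg_of_sum_eq_zero {ι K : Type*} [Fintype ι] [Field K]
    [CharZero K] [DecidableEq K] {f : ι → K} {a : K} (ha : a ≠ 0)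
    (hf : ∀ i, f i ∈ ({-a, 0, a} : Set K)) (hsum : ∑ i, f i = 0) :
    #{i | f i = a} = #{i | f i = -a} := by
  have hdecomp : ∀ i, f i = (if f i = a then a else 0) - (if f i = -a then a else 0) := by
    intro i
    have hne : a ≠ -a := fun h => ha (by linear_combination h / 2)
    obtain h | h | h := hf i
    · rw [h, if_neg hne.symm, if_pos rfl]; ring
    · rw [h, if_neg ha.symm, if_neg (neg_ne_zero.2 ha).symm]; ring
    · rw [h, if_pos rfl, if_neg hne]; ring
  have hcard : (#{i | f i = a} - #{i | f i = -a} : K) * a = 0 := by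
    rw [← hsum, Finset.sum_congr rfl fun i _ => hdecomp i, sum_sub_distrib, ← sum_filter,
      ← sum_filter, sum_const, sum_const, nsmul_eq_mul, nsmul_eq_mul, sub_mul]
  exact_mod_cast sub_eq_zero.1 ((mul_eq_zero.1 hcard).resolve_right ha)

section Torus

variable {M : ℕ} {θ : ZMod M × ZMod M → ℝ}

lemma latticeCurl_mem (hE : ∀ i j : ZMod M, NotPiMod (θ (i + 1, j) - θ (i, j)))
    (hN : ∀ i j : ZMod M, NotPiMod (θ (i, j + 1) - θ (i, j))) (i j : ZMod M) :
    latticeCurl θ i j ∈ ({-(2 * π), 0, 2 * π} : Set ℝ) := by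
  refine wrap_add_wrap_add_wrap_add_wrap_mem (by ring) (hE i j) (hN (i + 1) j) ?_ ?_
  · simpa only [neg_sub] using (hE i (j + 1)).neg
  · simpa only [neg_sub] using (hN i j).neg

lemma sum_latticeCurl_eq_zero [NeZero M]
    (hE : ∀ i j : ZMod M, NotPiMod (θ (i + 1, j) - θ (i, j)))
    (hN : ∀ i j : ZMod M, NotPiMod (θ (i, j + 1) - θ (i, j))) :
    ∑ c : ZMod M × ZMod M, latticeCurl θ c.1 c.2 = 0 := by
  have hright : ∑ c : ZMod M × ZMod M, wrap (θ (c.1 + 1, c.2 + 1) - θ (c.1 + 1, c.2)) =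
      ∑ c : ZMod M × ZMod M, wrap (θ (c.1, c.2 + 1) - θ (c.1, c.2)) :=
    Fintype.sum_equiv (Equiv.addRight (1, 0)) _ _ fun c => by simp
  have htop : ∑ c : ZMod M × ZMod M, wrap (θ (c.1, c.2 + 1) - θ (c.1 + 1, c.2 + 1)) =
      -∑ c : ZMod M × ZMod M, wrap (θ (c.1 + 1, c.2) - θ (c.1, c.2)) := by
    rw [← sum_neg_distrib]
    refine Fintype.sum_equiv (Equiv.addRight (0, 1)) _ _ fun c => ?_
    simpa [neg_sub] using (hE c.1 (c.2 + 1)).wrap_neg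
  have hleft : ∑ c : ZMod M × ZMod M, wrap (θ (c.1, c.2) - θ (c.1, c.2 + 1)) =
      -∑ c : ZMod M × ZMod M, wrap (θ (c.1, c.2 + 1) - θ (c.1, c.2)) := by
    rw [← sum_neg_distrib]
    refine sum_congr rfl fun c _ => ?_
    simpa [neg_sub] using (hN c.1 c.2).wrap_neg
  simp only [latticeCurl, sum_add_distrib]
  rw [hright, htop, hleft]
  ring

end Torus

open scoped Classical in
theorem card_pos_vortices_eq_card_neg_vortices_general (M : ℕ) [NeZero M]
    (θ : ZMod M × ZMod M → ℝ)
    (hE : ∀ i j : ZMod M, NotPiMod (θ (i + 1, j) - θ (i, j)))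
    (hN : ∀ i j : ZMod M, NotPiMod (θ (i, j + 1) - θ (i, j))) :
    (Finset.univ.filter fun c : ZMod M × ZMod M =>
        latticeCurl θ c.1 c.2 = 2 * Real.pi).card =
      (Finset.univ.filter fun c : ZMod M × ZMod M =>
        latticeCurl θ c.1 c.2 = -(2 * Real.pi)).card :=
  card_filter_eq_card_filter_neg_of_sum_eq_zero two_pi_pos.ne'
    (fun c => latticeCurl_mem hE hN c.1 c.2) (sum_latticeCurl_eq_zero hE hN)

open scoped Classical in
/-- On the `M × M` torus (`M ≥ 2`), if no nearest-neighbor phase difference is congruent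
to `π` mod `2π`, then positive phase vortices (cells of curl `+2π`) and negative phase
vortices (cells of curl `−2π`) occur in equal numbers. -/
theorem card_pos_vortices_eq_card_neg_vortices (M : ℕ) [NeZero M] (hM : 2 ≤ M)
    (θ : ZMod M × ZMod M → ℝ)
    (hE : ∀ i j : ZMod M, NotPiMod (θ (i + 1, j) - θ (i, j)))
    (hN : ∀ i j : ZMod M, NotPiMod (θ (i, j + 1) - θ (i, j))) :
    (Finset.univ.filter fun c : ZMod M × ZMod M =>
        latticeCurl θ c.1 c.2 = 2 * Real.pi).card =
      (Finset.univ.filter fun c : ZMod M × ZMod M =>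
        latticeCurl θ c.1 c.2 = -(2 * Real.pi)).card :=
  card_pos_vortices_eq_card_neg_vortices_general M θ hE hN
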